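/- arXiv:1801.09933 — 2 statements merged into one kernel-verified Lean document; each statement's English description precedes it below -/
import Mathlib

section
/- Fix β real with 0 < |β| < 1, γ = (1−β²)^{−1/2}, x₁, x₂ ∈ ℝ. Let A, Aₜ be the kink-antikink profile with parameters (β, x₁, x₂), let Q̃(x) = 4·arctan(e^{γ(x+x₁+x₂)}) with Q̃ₜ(x) = 2βγ·sech(γ(x+x₁+x₂)), and set d = a(β) = √((1+β)/(1−β)). Define μ_A(x) = cosh(γ(x+x₁+x₂))/(β² cosh²(γ(x+x₂)) + sinh²(γ x₁)). Then: (a) for all x ∈ ℝ, μ_A(x) = Aₜ(x)/(4β²γ) − A′(x)/(4βγ); (b) μ_A is smooth and satisfies for all x ∈ ℝ: μ_A′(x) − (1/2)·[(1/d)·cos((A(x)+Q̃(x))/2) + d·cos((A(x)−Q̃(x))/2)]·μ_A(x) = 0; (c) the integrand below is integrable and ∫_ℝ μ_A(x)·(A′(x) − Q̃ₜ(x)) dx = −4/β. -/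
open MeasureTheory Filter Real Set Topology

lemma cos_two_arctan' (t : ℝ) :
    Real.cos (2 * Real.arctan t) = (1 - t ^ 2) / (1 + t ^ 2) := by
  have h : (0:ℝ) < 1 + t ^ 2 := by positivity
  rw [Real.cos_two_mul, Real.cos_sq_arctan]
  field_simp
  ring

lemma sin_two_arctan' (t : ℝ) :
    Real.sin (2 * Real.arctan t) = 2 * t / (1 + t ^ 2) := by
  have h : Real.sqrt (1 + t ^ 2) ^ 2 = 1 + t ^ 2 := Real.sq_sqrt (by positivity)
  have h0 : Real.sqrt (1 + t ^ 2) ≠ 0 := by positivity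
  rw [Real.sin_two_mul, Real.sin_arctan, Real.cos_arctan]
  rw [show (1:ℝ) + t ^ 2 = Real.sqrt (1 + t ^ 2) ^ 2 from h.symm]
  field_simp
  simp [h]

lemma cos_two_arctan_exp' (θ : ℝ) :
    Real.cos (2 * Real.arctan (Real.exp θ)) = - (Real.sinh θ / Real.cosh θ) := by
  have h := Real.cosh_pos θ
  rw [cos_two_arctan', Real.sinh_eq, Real.cosh_eq, Real.exp_neg]
  have he := Real.exp_ne_zero θ
  rw [Real.cosh_eq, Real.exp_neg] at h
  field_simp
  ring

lemma sin_two_arctan_exp' (θ : ℝ) :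
    Real.sin (2 * Real.arctan (Real.exp θ)) = (Real.cosh θ)⁻¹ := by
  have h := Real.cosh_pos θ
  rw [sin_two_arctan', Real.cosh_eq, Real.exp_neg]
  have he := Real.exp_ne_zero θ
  rw [Real.cosh_eq, Real.exp_neg] at h
  field_simp
  ring

lemma tendsto_tanh_top' : Tendsto (fun x : ℝ => Real.sinh x / Real.cosh x) atTop (𝓝 1) := by
  have heq : ∀ x : ℝ, Real.sinh x / Real.cosh x
      = (1 - Real.exp (-x) ^ 2) / (1 + Real.exp (-x) ^ 2) := by
    intro x
    have h := Real.cosh_pos x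
    rw [Real.cosh_eq, Real.exp_neg] at h
    rw [Real.sinh_eq, Real.cosh_eq, Real.exp_neg]
    have he := Real.exp_ne_zero x
    have h2 : (0:ℝ) < 1 + ((Real.exp x)⁻¹) ^ 2 := by positivity
    field_simp
  simp only [heq]
  have h1 : Tendsto (fun x : ℝ => Real.exp (-x)) atTop (𝓝 0) :=
    Real.tendsto_exp_neg_atTop_nhds_zero
  have h2 : Tendsto (fun u : ℝ => (1 - u ^ 2) / (1 + u ^ 2)) (𝓝 0) (𝓝 1) := by
    have : ContinuousAt (fun u : ℝ => (1 - u ^ 2) / (1 + u ^ 2)) 0 := by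
      apply ContinuousAt.div
      · fun_prop
      · fun_prop
      · norm_num
    simpa using this.tendsto
  exact h2.comp h1

lemma tendsto_tanh_bot' : Tendsto (fun x : ℝ => Real.sinh x / Real.cosh x) atBot (𝓝 (-1)) := by
  have heq : ∀ x : ℝ, Real.sinh x / Real.cosh x
      = (Real.exp x ^ 2 - 1) / (Real.exp x ^ 2 + 1) := by
    intro x
    have h := Real.cosh_pos x
    rw [Real.cosh_eq, Real.exp_neg] at h
    rw [Real.sinh_eq, Real.cosh_eq, Real.exp_neg]
    have he := Real.exp_ne_zero x
    have h2 : (0:ℝ) < Real.exp x ^ 2 + 1 := by positivity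
    field_simp
  simp only [heq]
  have h1 : Tendsto (fun x : ℝ => Real.exp x) atBot (𝓝 0) := Real.tendsto_exp_atBot
  have h2 : Tendsto (fun u : ℝ => (u ^ 2 - 1) / (u ^ 2 + 1)) (𝓝 0) (𝓝 (-1)) := by
    have : ContinuousAt (fun u : ℝ => (u ^ 2 - 1) / (u ^ 2 + 1)) 0 := by
      apply ContinuousAt.div
      · fun_prop
      · fun_prop
      · norm_num
    simpa using this.tendsto
  exact h2.comp h1


lemma sech_sq_intOn_Ioi' (a b : ℝ) (ha : 0 < a) :
    IntegrableOn (fun x : ℝ => a * ((Real.cosh (a * x + b)) ^ 2)⁻¹) (Ioi 0) := by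
  have hT : ∀ x : ℝ, HasDerivAt (fun x : ℝ => Real.sinh (a * x + b) / Real.cosh (a * x + b))
      (a * ((Real.cosh (a * x + b)) ^ 2)⁻¹) x := by
    intro x
    have hlin : HasDerivAt (fun x : ℝ => a * x + b) a x := by
      simpa using ((hasDerivAt_id x).const_mul a).add_const b
    have hs : HasDerivAt (fun x : ℝ => Real.sinh (a * x + b)) (Real.cosh (a * x + b) * a) x :=
      (Real.hasDerivAt_sinh _).comp x hlin
    have hc : HasDerivAt (fun x : ℝ => Real.cosh (a * x + b)) (Real.sinh (a * x + b) * a) x :=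
      (Real.hasDerivAt_cosh _).comp x hlin
    have h := hs.div hc (Real.cosh_pos _).ne'
    refine h.congr_deriv (Eq.symm ?_)
    have hcne := (Real.cosh_pos (a * x + b)).ne'
    field_simp
    linear_combination (-1 : ℝ) * Real.cosh_sq_sub_sinh_sq (a * x + b)
  have htop : Tendsto (fun x : ℝ => Real.sinh (a * x + b) / Real.cosh (a * x + b)) atTop (𝓝 1) := by
    have hlin : Tendsto (fun x : ℝ => a * x + b) atTop atTop :=
      tendsto_atTop_add_const_right _ b (Tendsto.const_mul_atTop ha tendsto_id)
    exact tendsto_tanh_top'.comp hlin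
  exact integrableOn_Ioi_deriv_of_nonneg' (fun x _ => hT x)
    (fun x _ => by positivity) htop

lemma integrable_sech_sq' (a b : ℝ) (ha : 0 < a) :
    Integrable (fun x : ℝ => a * ((Real.cosh (a * x + b)) ^ 2)⁻¹) := by
  have h1 := sech_sq_intOn_Ioi' a b ha
  have h2 : IntegrableOn (fun x : ℝ => a * ((Real.cosh (a * x + b)) ^ 2)⁻¹) (Iic 0) := by
    rw [show (volume : Measure ℝ) = Measure.map Neg.neg volume from
      (Measure.map_neg_eq_self (volume : Measure ℝ)).symm]
    have m : MeasurableEmbedding fun x : ℝ => -x :=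
      (Homeomorph.neg ℝ).measurableEmbedding
    rw [m.integrableOn_map_iff]
    have : (fun x : ℝ => a * ((Real.cosh (a * x + b)) ^ 2)⁻¹) ∘ (fun x : ℝ => -x)
        = fun x : ℝ => a * ((Real.cosh (a * x + -b)) ^ 2)⁻¹ := by
      funext x
      simp only [Function.comp_apply]
      rw [show a * -x + b = -(a * x + -b) from by ring, Real.cosh_neg]
    rw [this, show Neg.neg ⁻¹' (Iic (0:ℝ)) = Ici 0 from by simp [neg_preimage, neg_Iic],
      integrableOn_Ici_iff_integrableOn_Ioi]
    exact sech_sq_intOn_Ioi' a (-b) ha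
  rw [← integrableOn_univ, ← Set.Iic_union_Ioi (a := (0:ℝ))]
  exact h2.union h1

set_option maxHeartbeats 1600000 in
/-- **Integrating factor for the kink-antikink (Lemma 9.3).**
With `0 < |β| < 1`, `γ = (1−β²)^{-1/2}`, `d = √((1+β)/(1−β))`, the function
`μ_A(x) = cosh(γ(x+x₁+x₂))/(β²cosh²(γ(x+x₂))+sinh²(γx₁))` satisfies
`μ_A = Aₜ/(4β²γ) − A′/(4βγ)`, is smooth, solves
`μ_A′ = (1/2)[(1/d)cos((A+Q̃)/2) + d cos((A−Q̃)/2)] μ_A`, and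
`∫ μ_A (A′ − Q̃ₜ) = −4/β`. -/
theorem integrating_factor_kink_antikink (β x₁ x₂ : ℝ) (hβ0 : 0 < |β|) (hβ1 : |β| < 1)
    (γ : ℝ) (hγ : γ = (1 - β ^ 2) ^ (-(1 / 2 : ℝ)))
    (A At : ℝ → ℝ)
    (hA : ∀ x : ℝ, A x
      = 4 * Real.arctan (Real.sinh (γ * x₁) / (β * Real.cosh (γ * (x + x₂)))))
    (hAt : ∀ x : ℝ, At x
      = 4 * β ^ 2 * γ * Real.cosh (γ * (x + x₂)) * Real.cosh (γ * x₁)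
          / (β ^ 2 * (Real.cosh (γ * (x + x₂))) ^ 2 + (Real.sinh (γ * x₁)) ^ 2))
    (Q Qt : ℝ → ℝ)
    (hQ : ∀ x : ℝ, Q x = 4 * Real.arctan (Real.exp (γ * (x + x₁ + x₂))))
    (hQt : ∀ x : ℝ, Qt x = 2 * β * γ * (Real.cosh (γ * (x + x₁ + x₂)))⁻¹)
    (d : ℝ) (hd : d = Real.sqrt ((1 + β) / (1 - β)))
    (μA : ℝ → ℝ)
    (hμA : ∀ x : ℝ, μA x = Real.cosh (γ * (x + x₁ + x₂))
      / (β ^ 2 * (Real.cosh (γ * (x + x₂))) ^ 2 + (Real.sinh (γ * x₁)) ^ 2)) :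
    -- (a)
    (∀ x : ℝ, μA x = At x / (4 * β ^ 2 * γ) - deriv A x / (4 * β * γ)) ∧
    -- (b)
    (ContDiff ℝ (⊤ : ℕ∞) μA) ∧
    (∀ x : ℝ, deriv μA x
      - (1 / 2) * ((1 / d) * Real.cos ((A x + Q x) / 2)
          + d * Real.cos ((A x - Q x) / 2)) * μA x = 0) ∧
    -- (c)
    (Integrable (fun x : ℝ => μA x * (deriv A x - Qt x))) ∧
    (∫ x : ℝ, μA x * (deriv A x - Qt x)) = -4 / β := by
  obtain rfl : A = fun x : ℝ => 4 * Real.arctan (Real.sinh (γ * x₁)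
      / (β * Real.cosh (γ * (x + x₂)))) := funext hA
  obtain rfl : Q = fun x : ℝ => 4 * Real.arctan (Real.exp (γ * (x + x₁ + x₂))) := funext hQ
  obtain rfl : Qt = fun x : ℝ => 2 * β * γ * (Real.cosh (γ * (x + x₁ + x₂)))⁻¹ := funext hQt
  obtain rfl : μA = fun x : ℝ => Real.cosh (γ * (x + x₁ + x₂))
      / (β ^ 2 * (Real.cosh (γ * (x + x₂))) ^ 2 + (Real.sinh (γ * x₁)) ^ 2) := funext hμA
  have hβ : β ≠ 0 := by
    intro h; rw [h] at hβ0; simp at hβ0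
  have hb2 : β ^ 2 < 1 := by nlinarith [sq_abs β, abs_nonneg β]
  have hb2pos : 0 < β ^ 2 := by nlinarith [sq_abs β]
  have h1b : 0 < 1 - β ^ 2 := by linarith
  have hγpos : 0 < γ := by rw [hγ]; positivity
  have hγne : γ ≠ 0 := hγpos.ne'
  have hγsq : γ ^ 2 * (1 - β ^ 2) = 1 := by
    have h2 : γ ^ 2 = (1 - β ^ 2) ^ (-(1:ℝ)) := by
      rw [hγ, ← Real.rpow_natCast ((1 - β ^ 2) ^ (-(1/2:ℝ))) 2, ← Real.rpow_mul h1b.le]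
      norm_num
    rw [h2, Real.rpow_neg_one]
    field_simp
  have hsplit : ∀ x : ℝ, γ * (x + x₁ + x₂) = γ * (x + x₂) + γ * x₁ := fun x => by ring
  have hDpos : ∀ x : ℝ,
      0 < β ^ 2 * Real.cosh (γ * (x + x₂)) ^ 2 + Real.sinh (γ * x₁) ^ 2 := by
    intro x
    have h1 := mul_pos hb2pos (pow_pos (Real.cosh_pos (γ * (x + x₂))) 2)
    nlinarith [sq_nonneg (Real.sinh (γ * x₁))]
  have hcne : ∀ x : ℝ, Real.cosh (γ * (x + x₂)) ≠ 0 := fun x => (Real.cosh_pos _).ne'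
  -- derivative of A
  have hAd : ∀ x : ℝ, HasDerivAt (fun x : ℝ => 4 * Real.arctan (Real.sinh (γ * x₁)
        / (β * Real.cosh (γ * (x + x₂)))))
      (-4 * β * γ * Real.sinh (γ * x₁) * Real.sinh (γ * (x + x₂))
        / (β ^ 2 * Real.cosh (γ * (x + x₂)) ^ 2 + Real.sinh (γ * x₁) ^ 2)) x := by
    intro x
    have h1 : HasDerivAt (fun x : ℝ => γ * (x + x₂)) γ x := by
      simpa using ((hasDerivAt_id x).add_const x₂).const_mul γ
    have h2 : HasDerivAt (fun x : ℝ => Real.cosh (γ * (x + x₂)))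
        (Real.sinh (γ * (x + x₂)) * γ) x := (Real.hasDerivAt_cosh _).comp x h1
    have h3 : HasDerivAt (fun x : ℝ => β * Real.cosh (γ * (x + x₂)))
        (β * (Real.sinh (γ * (x + x₂)) * γ)) x := h2.const_mul β
    have hne : β * Real.cosh (γ * (x + x₂)) ≠ 0 := mul_ne_zero hβ (hcne x)
    have h4 := (hasDerivAt_const x (Real.sinh (γ * x₁))).div h3 hne
    have h5 := ((Real.hasDerivAt_arctan _).comp x h4).const_mul (4:ℝ)
    refine h5.congr_deriv (Eq.symm ?_)
    have hD := (hDpos x).ne'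
    have hu : 1 + (Real.sinh (γ * x₁) / (β * Real.cosh (γ * (x + x₂)))) ^ 2 ≠ 0 := by
      positivity
    simp only [Pi.div_apply]
    field_simp
    ring
  -- part (c) preparation
  have hm2pos : 0 < β ^ 2 + Real.sinh (γ * x₁) ^ 2 := add_pos_of_pos_of_nonneg hb2pos (sq_nonneg _)
  have haffT : Tendsto (fun x : ℝ => γ * (x + x₂)) atTop atTop :=
    Tendsto.const_mul_atTop hγpos (tendsto_atTop_add_const_right _ x₂ tendsto_id)
  have haffB : Tendsto (fun x : ℝ => γ * (x + x₂)) atBot atBot :=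
    Tendsto.const_mul_atBot hγpos (tendsto_atBot_add_const_right _ x₂ tendsto_id)
  have hTtop : Tendsto (fun x : ℝ => Real.sinh (γ * (x + x₂)) / Real.cosh (γ * (x + x₂))) atTop (𝓝 1) :=
    tendsto_tanh_top'.comp haffT
  have hTbot : Tendsto (fun x : ℝ => Real.sinh (γ * (x + x₂)) / Real.cosh (γ * (x + x₂))) atBot (𝓝 (-1)) :=
    tendsto_tanh_bot'.comp haffB
  have hcoshT : Tendsto (fun x : ℝ => Real.cosh (γ * (x + x₂))) atTop atTop := by
    apply tendsto_atTop_mono ?_ ((Real.tendsto_exp_atTop.comp haffT).atTop_div_const two_pos)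
    intro x
    have := (Real.exp_pos (-(γ * (x + x₂)))).le
    rw [Function.comp_apply, Real.cosh_eq]
    linarith
  have hcoshB : Tendsto (fun x : ℝ => Real.cosh (γ * (x + x₂))) atBot atTop := by
    have hneg : Tendsto (fun x : ℝ => -(γ * (x + x₂))) atBot atTop :=
      tendsto_neg_atBot_atTop.comp haffB
    apply tendsto_atTop_mono ?_ ((Real.tendsto_exp_atTop.comp hneg).atTop_div_const two_pos)
    intro x
    have := (Real.exp_pos (γ * (x + x₂))).le
    rw [Function.comp_apply, Real.cosh_eq]
    linarith
  have hcinvT : Tendsto (fun x : ℝ => (Real.cosh (γ * (x + x₂)))⁻¹) atTop (𝓝 0) := hcoshT.inv_tendsto_atTop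
  have hcinvB : Tendsto (fun x : ℝ => (Real.cosh (γ * (x + x₂)))⁻¹) atBot (𝓝 0) := hcoshB.inv_tendsto_atTop
  -- the clean integrand is integrable
  have hbase : Continuous (fun x : ℝ => γ * (x + x₂)) :=
    continuous_const.mul (continuous_id.add continuous_const)
  have hcC : Continuous (fun x : ℝ => Real.cosh (γ * (x + x₂))) := Real.continuous_cosh.comp hbase
  have hsC : Continuous (fun x : ℝ => Real.sinh (γ * (x + x₂))) := Real.continuous_sinh.comp hbase
  have hgcont : Continuous (fun x : ℝ => -2 * β * γ * (2 * Real.sinh (γ * x₁) * Real.sinh (γ * (x + x₂)) * (Real.cosh (γ * (x + x₂)) * Real.cosh (γ * x₁) + Real.sinh (γ * (x + x₂)) * Real.sinh (γ * x₁)) + (β ^ 2 * Real.cosh (γ * (x + x₂)) ^ 2 + Real.sinh (γ * x₁) ^ 2)) / (β ^ 2 * Real.cosh (γ * (x + x₂)) ^ 2 + Real.sinh (γ * x₁) ^ 2) ^ 2) := by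
    apply Continuous.div
    · exact continuous_const.mul (((continuous_const.mul hsC).mul
        ((hcC.mul continuous_const).add (hsC.mul continuous_const))).add
        ((continuous_const.mul (hcC.pow 2)).add continuous_const))
    · exact ((continuous_const.mul (hcC.pow 2)).add continuous_const).pow 2
    · exact fun x => pow_ne_zero 2 (hDpos x).ne'
  have hsechInt : Integrable (fun x : ℝ => γ * (Real.cosh (γ * (x + x₂)) ^ 2)⁻¹) := by
    have h := integrable_sech_sq' γ (γ * x₂) hγpos
    have he : (fun x : ℝ => γ * ((Real.cosh (γ * x + γ * x₂)) ^ 2)⁻¹)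
        = fun x : ℝ => γ * (Real.cosh (γ * (x + x₂)) ^ 2)⁻¹ := by
      funext x
      rw [show γ * x + γ * x₂ = γ * (x + x₂) from by ring]
    rwa [he] at h
  have hbound : ∀ x : ℝ, ‖-2 * β * γ * (2 * Real.sinh (γ * x₁) * Real.sinh (γ * (x + x₂)) * (Real.cosh (γ * (x + x₂)) * Real.cosh (γ * x₁) + Real.sinh (γ * (x + x₂)) * Real.sinh (γ * x₁)) + (β ^ 2 * Real.cosh (γ * (x + x₂)) ^ 2 + Real.sinh (γ * x₁) ^ 2)) / (β ^ 2 * Real.cosh (γ * (x + x₂)) ^ 2 + Real.sinh (γ * x₁) ^ 2) ^ 2‖ ≤ (2 * |β| * (2 * |Real.sinh (γ * x₁)| * (Real.cosh (γ * x₁) + |Real.sinh (γ * x₁)|) + (β ^ 2 + Real.sinh (γ * x₁) ^ 2)) / β ^ 4) * (γ * (Real.cosh (γ * (x + x₂)) ^ 2)⁻¹) := by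
    intro x
    have hc1 : 1 ≤ Real.cosh (γ * (x + x₂)) := Real.one_le_cosh _
    have hcpos : 0 < Real.cosh (γ * (x + x₂)) := Real.cosh_pos _
    have hσ : |Real.sinh (γ * (x + x₂))| ≤ Real.cosh (γ * (x + x₂)) := by
      have e1 := (Real.exp_pos (γ * (x + x₂))).le
      have e2 := (Real.exp_pos (-(γ * (x + x₂)))).le
      rw [abs_le, Real.sinh_eq, Real.cosh_eq]
      constructor <;> linarith
    have hX : 0 < Real.cosh (γ * (x + x₂)) * Real.cosh (γ * x₁) + Real.sinh (γ * (x + x₂)) * Real.sinh (γ * x₁) := by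
      rw [← Real.cosh_add]; exact Real.cosh_pos _
    have hXle : Real.cosh (γ * (x + x₂)) * Real.cosh (γ * x₁) + Real.sinh (γ * (x + x₂)) * Real.sinh (γ * x₁) ≤ Real.cosh (γ * (x + x₂)) * (Real.cosh (γ * x₁) + |Real.sinh (γ * x₁)|) := by
      have h1 : Real.sinh (γ * (x + x₂)) * Real.sinh (γ * x₁) ≤ |Real.sinh (γ * (x + x₂))| * |Real.sinh (γ * x₁)| := by rw [← abs_mul]; exact le_abs_self _
      have h2 : |Real.sinh (γ * (x + x₂))| * |Real.sinh (γ * x₁)| ≤ Real.cosh (γ * (x + x₂)) * |Real.sinh (γ * x₁)| := mul_le_mul_of_nonneg_right hσ (abs_nonneg _)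
      nlinarith
    have hterm : |2 * Real.sinh (γ * x₁) * Real.sinh (γ * (x + x₂)) * (Real.cosh (γ * (x + x₂)) * Real.cosh (γ * x₁) + Real.sinh (γ * (x + x₂)) * Real.sinh (γ * x₁))|
        ≤ 2 * |Real.sinh (γ * x₁)| * (Real.cosh (γ * x₁) + |Real.sinh (γ * x₁)|) * Real.cosh (γ * (x + x₂)) ^ 2 := by
      rw [abs_mul]
      have h3 : |2 * Real.sinh (γ * x₁) * Real.sinh (γ * (x + x₂))| ≤ 2 * |Real.sinh (γ * x₁)| * Real.cosh (γ * (x + x₂)) := by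
        rw [abs_mul, abs_mul]
        have h5 : |(2:ℝ)| = 2 := by norm_num
        rw [h5]
        exact mul_le_mul_of_nonneg_left hσ (by positivity)
      have h4 : |Real.cosh (γ * (x + x₂)) * Real.cosh (γ * x₁) + Real.sinh (γ * (x + x₂)) * Real.sinh (γ * x₁)| ≤ Real.cosh (γ * (x + x₂)) * (Real.cosh (γ * x₁) + |Real.sinh (γ * x₁)|) := by
        rw [abs_of_pos hX]; exact hXle
      calc |2 * Real.sinh (γ * x₁) * Real.sinh (γ * (x + x₂))| * |Real.cosh (γ * (x + x₂)) * Real.cosh (γ * x₁) + Real.sinh (γ * (x + x₂)) * Real.sinh (γ * x₁)|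
          ≤ (2 * |Real.sinh (γ * x₁)| * Real.cosh (γ * (x + x₂))) * (Real.cosh (γ * (x + x₂)) * (Real.cosh (γ * x₁) + |Real.sinh (γ * x₁)|)) :=
            mul_le_mul h3 h4 (abs_nonneg (Real.cosh (γ * (x + x₂)) * Real.cosh (γ * x₁) + Real.sinh (γ * (x + x₂)) * Real.sinh (γ * x₁))) (by positivity)
        _ = 2 * |Real.sinh (γ * x₁)| * (Real.cosh (γ * x₁) + |Real.sinh (γ * x₁)|) * Real.cosh (γ * (x + x₂)) ^ 2 := by ring
    have hNabs : |(2 * Real.sinh (γ * x₁) * Real.sinh (γ * (x + x₂)) * (Real.cosh (γ * (x + x₂)) * Real.cosh (γ * x₁) + Real.sinh (γ * (x + x₂)) * Real.sinh (γ * x₁)) + (β ^ 2 * Real.cosh (γ * (x + x₂)) ^ 2 + Real.sinh (γ * x₁) ^ 2))| ≤ (2 * |Real.sinh (γ * x₁)| * (Real.cosh (γ * x₁) + |Real.sinh (γ * x₁)|) + (β ^ 2 + Real.sinh (γ * x₁) ^ 2)) * Real.cosh (γ * (x + x₂)) ^ 2 := by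
      have hDle : β ^ 2 * Real.cosh (γ * (x + x₂)) ^ 2 + Real.sinh (γ * x₁) ^ 2 ≤ (β ^ 2 + Real.sinh (γ * x₁) ^ 2) * Real.cosh (γ * (x + x₂)) ^ 2 := by
        have h7 : 0 ≤ Real.sinh (γ * x₁) ^ 2 * (Real.cosh (γ * (x + x₂)) ^ 2 - 1) :=
          mul_nonneg (sq_nonneg _) (by nlinarith [hc1])
        nlinarith [h7]
      calc |(2 * Real.sinh (γ * x₁) * Real.sinh (γ * (x + x₂)) * (Real.cosh (γ * (x + x₂)) * Real.cosh (γ * x₁) + Real.sinh (γ * (x + x₂)) * Real.sinh (γ * x₁)) + (β ^ 2 * Real.cosh (γ * (x + x₂)) ^ 2 + Real.sinh (γ * x₁) ^ 2))| ≤ |2 * Real.sinh (γ * x₁) * Real.sinh (γ * (x + x₂)) * (Real.cosh (γ * (x + x₂)) * Real.cosh (γ * x₁) + Real.sinh (γ * (x + x₂)) * Real.sinh (γ * x₁))| + |(β ^ 2 * Real.cosh (γ * (x + x₂)) ^ 2 + Real.sinh (γ * x₁) ^ 2)| := abs_add_le _ _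
        _ ≤ 2 * |Real.sinh (γ * x₁)| * (Real.cosh (γ * x₁) + |Real.sinh (γ * x₁)|) * Real.cosh (γ * (x + x₂)) ^ 2 + (β ^ 2 + Real.sinh (γ * x₁) ^ 2) * Real.cosh (γ * (x + x₂)) ^ 2 := by
            refine add_le_add hterm ?_
            rw [abs_of_pos (hDpos x)]
            exact hDle
        _ = (2 * |Real.sinh (γ * x₁)| * (Real.cosh (γ * x₁) + |Real.sinh (γ * x₁)|) + (β ^ 2 + Real.sinh (γ * x₁) ^ 2)) * Real.cosh (γ * (x + x₂)) ^ 2 := by ring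
    have hbd : β ^ 4 * Real.cosh (γ * (x + x₂)) ^ 4 ≤ (β ^ 2 * Real.cosh (γ * (x + x₂)) ^ 2 + Real.sinh (γ * x₁) ^ 2) ^ 2 := by
      nlinarith [mul_nonneg (mul_nonneg hb2pos.le (sq_nonneg (Real.cosh (γ * (x + x₂))))) (sq_nonneg (Real.sinh (γ * x₁))),
        sq_nonneg (Real.sinh (γ * x₁) ^ 2)]
    have hnumabs : |-2 * β * γ * (2 * Real.sinh (γ * x₁) * Real.sinh (γ * (x + x₂)) * (Real.cosh (γ * (x + x₂)) * Real.cosh (γ * x₁) + Real.sinh (γ * (x + x₂)) * Real.sinh (γ * x₁)) + (β ^ 2 * Real.cosh (γ * (x + x₂)) ^ 2 + Real.sinh (γ * x₁) ^ 2))| ≤ 2 * |β| * γ * ((2 * |Real.sinh (γ * x₁)| * (Real.cosh (γ * x₁) + |Real.sinh (γ * x₁)|) + (β ^ 2 + Real.sinh (γ * x₁) ^ 2)) * Real.cosh (γ * (x + x₂)) ^ 2) := by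
      rw [abs_mul, abs_mul, abs_mul, abs_of_pos hγpos]
      have h6 : |(-2:ℝ)| = 2 := by norm_num
      rw [h6]
      exact mul_le_mul_of_nonneg_left hNabs (by positivity)
    rw [Real.norm_eq_abs, abs_div, abs_of_pos (pow_pos (hDpos x) 2)]
    calc |-2 * β * γ * (2 * Real.sinh (γ * x₁) * Real.sinh (γ * (x + x₂)) * (Real.cosh (γ * (x + x₂)) * Real.cosh (γ * x₁) + Real.sinh (γ * (x + x₂)) * Real.sinh (γ * x₁)) + (β ^ 2 * Real.cosh (γ * (x + x₂)) ^ 2 + Real.sinh (γ * x₁) ^ 2))| / (β ^ 2 * Real.cosh (γ * (x + x₂)) ^ 2 + Real.sinh (γ * x₁) ^ 2) ^ 2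
        ≤ (2 * |β| * γ * ((2 * |Real.sinh (γ * x₁)| * (Real.cosh (γ * x₁) + |Real.sinh (γ * x₁)|) + (β ^ 2 + Real.sinh (γ * x₁) ^ 2)) * Real.cosh (γ * (x + x₂)) ^ 2)) / (β ^ 4 * Real.cosh (γ * (x + x₂)) ^ 4) :=
          div_le_div₀ (by positivity) hnumabs (by positivity) hbd
      _ = (2 * |β| * (2 * |Real.sinh (γ * x₁)| * (Real.cosh (γ * x₁) + |Real.sinh (γ * x₁)|) + (β ^ 2 + Real.sinh (γ * x₁) ^ 2)) / β ^ 4) * (γ * (Real.cosh (γ * (x + x₂)) ^ 2)⁻¹) := by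
          field_simp
  have hgI : Integrable (fun x : ℝ => -2 * β * γ * (2 * Real.sinh (γ * x₁) * Real.sinh (γ * (x + x₂)) * (Real.cosh (γ * (x + x₂)) * Real.cosh (γ * x₁) + Real.sinh (γ * (x + x₂)) * Real.sinh (γ * x₁)) + (β ^ 2 * Real.cosh (γ * (x + x₂)) ^ 2 + Real.sinh (γ * x₁) ^ 2)) / (β ^ 2 * Real.cosh (γ * (x + x₂)) ^ 2 + Real.sinh (γ * x₁) ^ 2) ^ 2) :=
    (hsechInt.const_mul (2 * |β| * (2 * |Real.sinh (γ * x₁)| * (Real.cosh (γ * x₁) + |Real.sinh (γ * x₁)|) + (β ^ 2 + Real.sinh (γ * x₁) ^ 2)) / β ^ 4)).mono' hgcont.aestronglyMeasurable (ae_of_all _ hbound)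
  -- antiderivative
  have hG : ∀ x : ℝ, HasDerivAt (fun x : ℝ => -2 * β * (Real.cosh (γ * x₁) * Real.sinh (γ * x₁) * Real.sinh (γ * (x + x₂)) ^ 2 + (β ^ 2 + Real.sinh (γ * x₁) ^ 2) * (Real.sinh (γ * (x + x₂)) * Real.cosh (γ * (x + x₂)))) / ((β ^ 2 + Real.sinh (γ * x₁) ^ 2) * (β ^ 2 * Real.cosh (γ * (x + x₂)) ^ 2 + Real.sinh (γ * x₁) ^ 2))) (-2 * β * γ * (2 * Real.sinh (γ * x₁) * Real.sinh (γ * (x + x₂)) * (Real.cosh (γ * (x + x₂)) * Real.cosh (γ * x₁) + Real.sinh (γ * (x + x₂)) * Real.sinh (γ * x₁)) + (β ^ 2 * Real.cosh (γ * (x + x₂)) ^ 2 + Real.sinh (γ * x₁) ^ 2)) / (β ^ 2 * Real.cosh (γ * (x + x₂)) ^ 2 + Real.sinh (γ * x₁) ^ 2) ^ 2) x := by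
    intro x
    have h1' : HasDerivAt (fun x : ℝ => γ * (x + x₂)) γ x := by
      simpa using ((hasDerivAt_id x).add_const x₂).const_mul γ
    have hc : HasDerivAt (fun x : ℝ => Real.cosh (γ * (x + x₂))) (Real.sinh (γ * (x + x₂)) * γ) x := (Real.hasDerivAt_cosh _).comp x h1'
    have hs : HasDerivAt (fun x : ℝ => Real.sinh (γ * (x + x₂))) (Real.cosh (γ * (x + x₂)) * γ) x := (Real.hasDerivAt_sinh _).comp x h1'
    have hnum : HasDerivAt (fun x : ℝ => -2 * β * (Real.cosh (γ * x₁) * Real.sinh (γ * x₁) * Real.sinh (γ * (x + x₂)) ^ 2 + (β ^ 2 + Real.sinh (γ * x₁) ^ 2) * (Real.sinh (γ * (x + x₂)) * Real.cosh (γ * (x + x₂)))))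
        (-2 * β * (Real.cosh (γ * x₁) * Real.sinh (γ * x₁) * ((2:ℕ) * Real.sinh (γ * (x + x₂)) ^ 1 * (Real.cosh (γ * (x + x₂)) * γ))
          + (β ^ 2 + Real.sinh (γ * x₁) ^ 2) * ((Real.cosh (γ * (x + x₂)) * γ) * Real.cosh (γ * (x + x₂)) + Real.sinh (γ * (x + x₂)) * (Real.sinh (γ * (x + x₂)) * γ)))) x :=
      (((hs.pow 2).const_mul (Real.cosh (γ * x₁) * Real.sinh (γ * x₁))).add ((hs.mul hc).const_mul (β ^ 2 + Real.sinh (γ * x₁) ^ 2))).const_mul (-2 * β)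
    have hden : HasDerivAt (fun x : ℝ => (β ^ 2 + Real.sinh (γ * x₁) ^ 2) * (β ^ 2 * Real.cosh (γ * (x + x₂)) ^ 2 + Real.sinh (γ * x₁) ^ 2))
        ((β ^ 2 + Real.sinh (γ * x₁) ^ 2) * (β ^ 2 * ((2:ℕ) * Real.cosh (γ * (x + x₂)) ^ 1 * (Real.sinh (γ * (x + x₂)) * γ)) + 0)) x :=
      (((hc.pow 2).const_mul (β ^ 2)).add (hasDerivAt_const x (Real.sinh (γ * x₁) ^ 2))).const_mul (β ^ 2 + Real.sinh (γ * x₁) ^ 2)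
    have hDne := (hDpos x).ne'
    have h := hnum.div hden (mul_ne_zero hm2pos.ne' hDne)
    refine h.congr_deriv (Eq.symm ?_)
    rw [div_eq_div_iff (pow_ne_zero 2 hDne) (pow_ne_zero 2 (mul_ne_zero hm2pos.ne' hDne))]
    simp only [Real.cosh_eq, Real.sinh_eq, Real.exp_neg]
    field_simp
    ring
  -- limits of the antiderivative
  have hGrepr : (fun x : ℝ => -2 * β * (Real.cosh (γ * x₁) * Real.sinh (γ * x₁) * Real.sinh (γ * (x + x₂)) ^ 2 + (β ^ 2 + Real.sinh (γ * x₁) ^ 2) * (Real.sinh (γ * (x + x₂)) * Real.cosh (γ * (x + x₂)))) / ((β ^ 2 + Real.sinh (γ * x₁) ^ 2) * (β ^ 2 * Real.cosh (γ * (x + x₂)) ^ 2 + Real.sinh (γ * x₁) ^ 2)))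
      = fun x : ℝ => -2 * β * (Real.cosh (γ * x₁) * Real.sinh (γ * x₁) * (Real.sinh (γ * (x + x₂)) / Real.cosh (γ * (x + x₂))) ^ 2 + (β ^ 2 + Real.sinh (γ * x₁) ^ 2) * (Real.sinh (γ * (x + x₂)) / Real.cosh (γ * (x + x₂))))
        / ((β ^ 2 + Real.sinh (γ * x₁) ^ 2) * (β ^ 2 + Real.sinh (γ * x₁) ^ 2 * ((Real.cosh (γ * (x + x₂)))⁻¹) ^ 2)) := by
    funext x
    have hc := hcne x
    have hD := (hDpos x).ne'
    field_simp
  have hlimne : (β ^ 2 + Real.sinh (γ * x₁) ^ 2) * (β ^ 2 + Real.sinh (γ * x₁) ^ 2 * 0 ^ 2) ≠ 0 :=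
    (mul_pos hm2pos (by simpa using hb2pos)).ne'
  have hGtop : Tendsto (fun x : ℝ => -2 * β * (Real.cosh (γ * x₁) * Real.sinh (γ * x₁) * Real.sinh (γ * (x + x₂)) ^ 2 + (β ^ 2 + Real.sinh (γ * x₁) ^ 2) * (Real.sinh (γ * (x + x₂)) * Real.cosh (γ * (x + x₂)))) / ((β ^ 2 + Real.sinh (γ * x₁) ^ 2) * (β ^ 2 * Real.cosh (γ * (x + x₂)) ^ 2 + Real.sinh (γ * x₁) ^ 2))) atTop (𝓝 (-2 * β * (Real.cosh (γ * x₁) * Real.sinh (γ * x₁) * 1 ^ 2 + (β ^ 2 + Real.sinh (γ * x₁) ^ 2) * 1) / ((β ^ 2 + Real.sinh (γ * x₁) ^ 2) * (β ^ 2 + Real.sinh (γ * x₁) ^ 2 * 0 ^ 2)))) := by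
    rw [hGrepr]
    exact Tendsto.div
      (Tendsto.const_mul _ ((Tendsto.const_mul _ (hTtop.pow 2)).add (Tendsto.const_mul _ hTtop)))
      (Tendsto.const_mul _ (Tendsto.const_add _ (Tendsto.const_mul _ (hcinvT.pow 2)))) hlimne
  have hGbot : Tendsto (fun x : ℝ => -2 * β * (Real.cosh (γ * x₁) * Real.sinh (γ * x₁) * Real.sinh (γ * (x + x₂)) ^ 2 + (β ^ 2 + Real.sinh (γ * x₁) ^ 2) * (Real.sinh (γ * (x + x₂)) * Real.cosh (γ * (x + x₂)))) / ((β ^ 2 + Real.sinh (γ * x₁) ^ 2) * (β ^ 2 * Real.cosh (γ * (x + x₂)) ^ 2 + Real.sinh (γ * x₁) ^ 2))) atBot (𝓝 (-2 * β * (Real.cosh (γ * x₁) * Real.sinh (γ * x₁) * (-1) ^ 2 + (β ^ 2 + Real.sinh (γ * x₁) ^ 2) * (-1)) / ((β ^ 2 + Real.sinh (γ * x₁) ^ 2) * (β ^ 2 + Real.sinh (γ * x₁) ^ 2 * 0 ^ 2)))) := by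
    rw [hGrepr]
    exact Tendsto.div
      (Tendsto.const_mul _ ((Tendsto.const_mul _ (hTbot.pow 2)).add (Tendsto.const_mul _ hTbot)))
      (Tendsto.const_mul _ (Tendsto.const_add _ (Tendsto.const_mul _ (hcinvB.pow 2)))) hlimne
  have hIoi : ∫ x in Ioi (0:ℝ), (fun x : ℝ => -2 * β * γ * (2 * Real.sinh (γ * x₁) * Real.sinh (γ * (x + x₂)) * (Real.cosh (γ * (x + x₂)) * Real.cosh (γ * x₁) + Real.sinh (γ * (x + x₂)) * Real.sinh (γ * x₁)) + (β ^ 2 * Real.cosh (γ * (x + x₂)) ^ 2 + Real.sinh (γ * x₁) ^ 2)) / (β ^ 2 * Real.cosh (γ * (x + x₂)) ^ 2 + Real.sinh (γ * x₁) ^ 2) ^ 2) x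
      = (-2 * β * (Real.cosh (γ * x₁) * Real.sinh (γ * x₁) * 1 ^ 2 + (β ^ 2 + Real.sinh (γ * x₁) ^ 2) * 1) / ((β ^ 2 + Real.sinh (γ * x₁) ^ 2) * (β ^ 2 + Real.sinh (γ * x₁) ^ 2 * 0 ^ 2))) - (fun x : ℝ => -2 * β * (Real.cosh (γ * x₁) * Real.sinh (γ * x₁) * Real.sinh (γ * (x + x₂)) ^ 2 + (β ^ 2 + Real.sinh (γ * x₁) ^ 2) * (Real.sinh (γ * (x + x₂)) * Real.cosh (γ * (x + x₂)))) / ((β ^ 2 + Real.sinh (γ * x₁) ^ 2) * (β ^ 2 * Real.cosh (γ * (x + x₂)) ^ 2 + Real.sinh (γ * x₁) ^ 2))) 0 :=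
    integral_Ioi_of_hasDerivAt_of_tendsto' (fun x _ => hG x) hgI.integrableOn hGtop
  have hIic : ∫ x in Iic (0:ℝ), (fun x : ℝ => -2 * β * γ * (2 * Real.sinh (γ * x₁) * Real.sinh (γ * (x + x₂)) * (Real.cosh (γ * (x + x₂)) * Real.cosh (γ * x₁) + Real.sinh (γ * (x + x₂)) * Real.sinh (γ * x₁)) + (β ^ 2 * Real.cosh (γ * (x + x₂)) ^ 2 + Real.sinh (γ * x₁) ^ 2)) / (β ^ 2 * Real.cosh (γ * (x + x₂)) ^ 2 + Real.sinh (γ * x₁) ^ 2) ^ 2) x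
      = (fun x : ℝ => -2 * β * (Real.cosh (γ * x₁) * Real.sinh (γ * x₁) * Real.sinh (γ * (x + x₂)) ^ 2 + (β ^ 2 + Real.sinh (γ * x₁) ^ 2) * (Real.sinh (γ * (x + x₂)) * Real.cosh (γ * (x + x₂)))) / ((β ^ 2 + Real.sinh (γ * x₁) ^ 2) * (β ^ 2 * Real.cosh (γ * (x + x₂)) ^ 2 + Real.sinh (γ * x₁) ^ 2))) 0 - (-2 * β * (Real.cosh (γ * x₁) * Real.sinh (γ * x₁) * (-1) ^ 2 + (β ^ 2 + Real.sinh (γ * x₁) ^ 2) * (-1)) / ((β ^ 2 + Real.sinh (γ * x₁) ^ 2) * (β ^ 2 + Real.sinh (γ * x₁) ^ 2 * 0 ^ 2))) :=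
    integral_Iic_of_hasDerivAt_of_tendsto' (fun x _ => hG x) hgI.integrableOn hGbot
  have hval : (∫ x : ℝ, (fun x : ℝ => -2 * β * γ * (2 * Real.sinh (γ * x₁) * Real.sinh (γ * (x + x₂)) * (Real.cosh (γ * (x + x₂)) * Real.cosh (γ * x₁) + Real.sinh (γ * (x + x₂)) * Real.sinh (γ * x₁)) + (β ^ 2 * Real.cosh (γ * (x + x₂)) ^ 2 + Real.sinh (γ * x₁) ^ 2)) / (β ^ 2 * Real.cosh (γ * (x + x₂)) ^ 2 + Real.sinh (γ * x₁) ^ 2) ^ 2) x) = -4 / β := by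
    rw [← intervalIntegral.integral_Iic_add_Ioi (b := (0:ℝ)) hgI.integrableOn hgI.integrableOn, hIic, hIoi]
    have h0 := (hDpos 0).ne'
    field_simp
    ring
  have hgx : ∀ x : ℝ, Real.cosh (γ * (x + x₁ + x₂))
        / (β ^ 2 * Real.cosh (γ * (x + x₂)) ^ 2 + Real.sinh (γ * x₁) ^ 2)
        * (deriv (fun x : ℝ => 4 * Real.arctan (Real.sinh (γ * x₁) / (β * Real.cosh (γ * (x + x₂))))) x
          - 2 * β * γ * (Real.cosh (γ * (x + x₁ + x₂)))⁻¹)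
      = -2 * β * γ * (2 * Real.sinh (γ * x₁) * Real.sinh (γ * (x + x₂)) * (Real.cosh (γ * (x + x₂)) * Real.cosh (γ * x₁) + Real.sinh (γ * (x + x₂)) * Real.sinh (γ * x₁)) + (β ^ 2 * Real.cosh (γ * (x + x₂)) ^ 2 + Real.sinh (γ * x₁) ^ 2)) / (β ^ 2 * Real.cosh (γ * (x + x₂)) ^ 2 + Real.sinh (γ * x₁) ^ 2) ^ 2 := by
    intro x
    rw [(hAd x).deriv, hsplit x, Real.cosh_add]
    have hDne := (hDpos x).ne'
    have hch2 : Real.cosh (γ * (x + x₂)) * Real.cosh (γ * x₁) + Real.sinh (γ * (x + x₂)) * Real.sinh (γ * x₁) ≠ 0 := by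
      rw [← Real.cosh_add]; exact (Real.cosh_pos _).ne'
    field_simp
    ring
  refine ⟨?_, ?_, ?_, ?_, ?_⟩
  · -- part (a)
    intro x
    rw [(hAd x).deriv, hAt x]
    simp only
    rw [hsplit x, Real.cosh_add]
    have hD := (hDpos x).ne'
    field_simp
    ring
  · -- smoothness
    have hl1 : ContDiff ℝ (⊤ : ℕ∞) (fun x : ℝ => γ * (x + x₁ + x₂)) :=
      contDiff_const.mul ((contDiff_id.add contDiff_const).add contDiff_const)
    have hl2 : ContDiff ℝ (⊤ : ℕ∞) (fun x : ℝ => γ * (x + x₂)) :=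
      contDiff_const.mul (contDiff_id.add contDiff_const)
    exact ContDiff.div (Real.contDiff_cosh.comp hl1)
      ((contDiff_const.mul ((Real.contDiff_cosh.comp hl2).pow 2)).add contDiff_const)
      (fun x => (hDpos x).ne')
  · -- ODE
    intro x
    have hβ2 := abs_lt.mp hβ1
    have h1β : 0 < 1 + β := by linarith
    have h2β : 0 < 1 - β := by linarith
    have hsq : (1 + β) / (1 - β) = (γ * (1 + β)) ^ 2 := by
      field_simp
      nlinarith [hγsq]
    have hdval : d = γ * (1 + β) := by
      rw [hd, hsq, Real.sqrt_sq (by positivity)]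
    have hdinv : 1 / d = γ * (1 - β) := by
      rw [hdval, div_eq_iff (by positivity : γ * (1 + β) ≠ 0)]
      nlinarith [hγsq]
    have hcoshθ : Real.cosh (γ * (x + x₁ + x₂)) ≠ 0 := (Real.cosh_pos _).ne'
    have hD := (hDpos x).ne'
    have hu : 1 + (Real.sinh (γ * x₁) / (β * Real.cosh (γ * (x + x₂)))) ^ 2 ≠ 0 := by
      positivity
    have hcoef : (1 / 2) * ((1 / d)
          * Real.cos ((4 * Real.arctan (Real.sinh (γ * x₁) / (β * Real.cosh (γ * (x + x₂))))
              + 4 * Real.arctan (Real.exp (γ * (x + x₁ + x₂)))) / 2)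
        + d * Real.cos ((4 * Real.arctan (Real.sinh (γ * x₁) / (β * Real.cosh (γ * (x + x₂))))
              - 4 * Real.arctan (Real.exp (γ * (x + x₁ + x₂)))) / 2))
        = γ * ((Real.sinh (γ * x₁) ^ 2 - β ^ 2 * Real.cosh (γ * (x + x₂)) ^ 2)
              * Real.sinh (γ * (x + x₁ + x₂))
            + 2 * β ^ 2 * Real.sinh (γ * x₁) * Real.cosh (γ * (x + x₂)))
          / ((β ^ 2 * Real.cosh (γ * (x + x₂)) ^ 2 + Real.sinh (γ * x₁) ^ 2)
              * Real.cosh (γ * (x + x₁ + x₂))) := by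
      rw [show (4 * Real.arctan (Real.sinh (γ * x₁) / (β * Real.cosh (γ * (x + x₂))))
            + 4 * Real.arctan (Real.exp (γ * (x + x₁ + x₂)))) / 2
          = 2 * Real.arctan (Real.sinh (γ * x₁) / (β * Real.cosh (γ * (x + x₂))))
            + 2 * Real.arctan (Real.exp (γ * (x + x₁ + x₂))) from by ring]
      rw [show (4 * Real.arctan (Real.sinh (γ * x₁) / (β * Real.cosh (γ * (x + x₂))))
            - 4 * Real.arctan (Real.exp (γ * (x + x₁ + x₂)))) / 2
          = 2 * Real.arctan (Real.sinh (γ * x₁) / (β * Real.cosh (γ * (x + x₂))))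
            - 2 * Real.arctan (Real.exp (γ * (x + x₁ + x₂))) from by ring]
      rw [Real.cos_add, Real.cos_sub, cos_two_arctan', sin_two_arctan',
        cos_two_arctan_exp', sin_two_arctan_exp', hdinv, hdval]
      field_simp
      ring
    have h1 : HasDerivAt (fun x : ℝ => γ * (x + x₁ + x₂)) γ x := by
      simpa using (((hasDerivAt_id x).add_const x₁).add_const x₂).const_mul γ
    have hnum : HasDerivAt (fun x : ℝ => Real.cosh (γ * (x + x₁ + x₂)))
        (Real.sinh (γ * (x + x₁ + x₂)) * γ) x := (Real.hasDerivAt_cosh _).comp x h1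
    have h1' : HasDerivAt (fun x : ℝ => γ * (x + x₂)) γ x := by
      simpa using ((hasDerivAt_id x).add_const x₂).const_mul γ
    have h2 : HasDerivAt (fun x : ℝ => Real.cosh (γ * (x + x₂)))
        (Real.sinh (γ * (x + x₂)) * γ) x := (Real.hasDerivAt_cosh _).comp x h1'
    have hden : HasDerivAt (fun x : ℝ => β ^ 2 * Real.cosh (γ * (x + x₂)) ^ 2
        + Real.sinh (γ * x₁) ^ 2)
        (β ^ 2 * ((2:ℕ) * Real.cosh (γ * (x + x₂)) ^ 1 * (Real.sinh (γ * (x + x₂)) * γ)) + 0) x :=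
      ((h2.pow 2).const_mul (β ^ 2)).add (hasDerivAt_const x _)
    have hμd : HasDerivAt (fun x : ℝ => Real.cosh (γ * (x + x₁ + x₂))
        / (β ^ 2 * Real.cosh (γ * (x + x₂)) ^ 2 + Real.sinh (γ * x₁) ^ 2)) _ x :=
      hnum.div hden (hDpos x).ne'
    rw [hμd.deriv]
    simp only
    rw [hcoef, sub_eq_zero, div_mul_div_comm, hsplit x, Real.cosh_add, Real.sinh_add]
    have hch2 : Real.cosh (γ * (x + x₂)) * Real.cosh (γ * x₁)
        + Real.sinh (γ * (x + x₂)) * Real.sinh (γ * x₁) ≠ 0 := by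
      rw [← Real.cosh_add]; exact (Real.cosh_pos _).ne'
    have hne1 : (β ^ 2 * Real.cosh (γ * (x + x₂)) ^ 2 + Real.sinh (γ * x₁) ^ 2) ^ 2 ≠ 0 :=
      pow_ne_zero 2 hD
    have hne2 : (β ^ 2 * Real.cosh (γ * (x + x₂)) ^ 2 + Real.sinh (γ * x₁) ^ 2)
        * (Real.cosh (γ * (x + x₂)) * Real.cosh (γ * x₁)
            + Real.sinh (γ * (x + x₂)) * Real.sinh (γ * x₁))
        * (β ^ 2 * Real.cosh (γ * (x + x₂)) ^ 2 + Real.sinh (γ * x₁) ^ 2) ≠ 0 :=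
      mul_ne_zero (mul_ne_zero hD hch2) hD
    rw [div_eq_div_iff hne1 hne2]
    simp only [Real.cosh_eq, Real.sinh_eq, Real.exp_neg]
    field_simp
    ring
  · exact hgI.congr (Filter.Eventually.of_forall fun x => (hgx x).symm)
  · exact (integral_congr_ae (Filter.Eventually.of_forall hgx)).trans hval
end

section
/- Fix β real with 0 < |β| < 1, α = √(1−β²), and x₁, x₂ ∈ ℝ. Let B(x; β, x₁, x₂) = 4·arctan(β sin(α x₁)/(α cosh(β(x+x₂)))) and Bₜ(x; β, x₁, x₂) = 4α²β cos(α x₁) cosh(β(x+x₂))/(α² cosh²(β(x+x₂)) + β² sin²(α x₁)), and write B′ = ∂ₓB, B_{t,1} = ∂_{x₁}Bₜ, B_{t,2} = ∂_{x₂}Bₜ. Then: (a) when x₂ = 0, the functions x ↦ Bₜ(x) and x ↦ B_{t,1}(x) are even, and the functions x ↦ B′(x) and x ↦ B_{t,2}(x) are odd; (b) for all x₁, x₂ ∈ ℝ, the products Bₜ·B′ and B_{t,1}·B_{t,2} are integrable over ℝ and ∫_ℝ Bₜ(x) B′(x) dx = 0 and ∫_ℝ B_{t,1}(x) B_{t,2}(x)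 dx = 0. -/
/-!
Both profiles depend on `x` and `x₂` only through `t = x + x₂` and are even in `t`, because
`cosh` is. Hence `∂ₓB` and `∂_{x₂}Bₜ` are `t`-derivatives of even functions, so odd in `t`,
while `∂_{x₁}Bₜ` stays even; both integrands are odd functions of `t` and integrate to zero.
For integrability, the common denominator `α² cosh² + β² sin²` dominates `α² cosh²`, which makes
each factor `O(1 / cosh (β t))`, and `1 / cosh u ≤ 4 / (1 + u²)` is integrable.
-/

open MeasureTheory Real Asymptotics Filter

theorem Function.Even.odd_deriv {𝕜 F : Type*} [NontriviallyNormedField 𝕜] [NormedAddCommGroup F]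
    [NormedSpace 𝕜 F] {f : 𝕜 → F} (hf : f.Even) : (deriv f).Odd := fun x => by
  calc deriv f (-x) = deriv (fun y => f (-y)) (-x) := by simp only [hf.eq]
    _ = -deriv f x := by rw [deriv_comp_neg, neg_neg]

theorem Function.Odd.integral_eq_zero {G E : Type*} [MeasurableSpace G] [AddGroup G]
    [MeasurableNeg G] [NormedAddCommGroup E] [NormedSpace ℝ E] {μ : Measure G} [μ.IsNegInvariant]
    {f : G → E} (hf : f.Odd) : ∫ x, f x ∂μ = 0 := by
  have h : ∫ x, f x ∂μ = -∫ x, f x ∂μ :=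
    calc ∫ x, f x ∂μ = ∫ x, f (-x) ∂μ := (integral_neg_eq_self f μ).symm
      _ = -∫ x, f x ∂μ := by simp only [hf.eq, integral_neg]
  have h2 : (2 : ℝ) • ∫ x, f x ∂μ = 0 := by
    rw [two_smul]
    nth_rewrite 2 [h]
    exact add_neg_cancel _
  exact (smul_eq_zero.mp h2).resolve_left two_ne_zero

theorem one_add_sq_le_four_mul_cosh (u : ℝ) : 1 + u ^ 2 ≤ 4 * cosh u := by
  rw [← cosh_abs, cosh_eq]
  nlinarith [quadratic_le_exp_of_nonneg (abs_nonneg u), exp_pos (-|u|), sq_abs u, abs_nonneg u]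

theorem integrable_inv_cosh_mul {β : ℝ} (hβ : β ≠ 0) :
    Integrable fun t => (cosh (β * t))⁻¹ := by
  refine ((integrable_inv_one_add_sq.comp_mul_left' hβ).const_mul 4).mono'
    (by fun_prop : Measurable _).aestronglyMeasurable (Eventually.of_forall fun t => ?_)
  rw [norm_inv, norm_of_nonneg (cosh_pos _).le, ← div_eq_mul_inv,
    inv_le_comm₀ (cosh_pos _) (by positivity), inv_div, div_le_iff₀' four_pos]
  exact one_add_sq_le_four_mul_cosh _

theorem isBigO_inv_cosh_of_abs_le {f : ℝ → ℝ} {β : ℝ} (K : ℝ)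
    (h : ∀ t, |f t| ≤ K / cosh (β * t)) : f =O[⊤] fun t => (cosh (β * t))⁻¹ :=
  IsBigO.of_bound K <| Eventually.of_forall fun t => by
    rw [norm_eq_abs, norm_inv, norm_of_nonneg (cosh_pos _).le, ← div_eq_mul_inv]
    exact h t

theorem integrable_mul_of_isBigO_inv_cosh {f g : ℝ → ℝ} {β : ℝ} (hβ : β ≠ 0)
    (hf : f =O[⊤] fun t => (cosh (β * t))⁻¹) (hg : g =O[⊤] fun t => (cosh (β * t))⁻¹)
    (hfm : AEStronglyMeasurable f) (hgm : AEStronglyMeasurable g) :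
    Integrable fun t => f t * g t := by
  have inv_cosh_bdd : (fun t => (cosh (β * t))⁻¹) =O[⊤] fun _ => (1 : ℝ) :=
    IsBigO.of_bound 1 <| Eventually.of_forall fun t => by
      rw [norm_one, mul_one, norm_inv, norm_of_nonneg (cosh_pos _).le]
      exact inv_le_one_of_one_le₀ (one_le_cosh _)
  have := hf.mul (hg.trans inv_cosh_bdd)
  simp only [mul_one] at this
  exact this.integrable (hfm.mul hgm) (integrable_inv_cosh_mul hβ)

/- `breather α β x₁ (x + x₂)` and `breatherDt α β x₁ (x + x₂)` are the paper's `B(x; β, x₁, x₂)`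
and `Bₜ(x; β, x₁, x₂)`. -/

section Breather

variable (α β : ℝ)

noncomputable def breatherDen (y t : ℝ) : ℝ := α ^ 2 * cosh (β * t) ^ 2 + β ^ 2 * sin (α * y) ^ 2

noncomputable def breather (y t : ℝ) : ℝ := 4 * arctan (β * sin (α * y) / (α * cosh (β * t)))

noncomputable def breatherDt (y t : ℝ) : ℝ :=
  4 * α ^ 2 * β * cos (α * y) * cosh (β * t) / breatherDen α β y t

variable {α β}

theorem breatherDen_pos (hα : α ≠ 0) (y t : ℝ) : 0 < breatherDen α β y t := by
  unfold breatherDen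
  positivity

theorem sq_mul_cosh_sq_le_breatherDen (y t : ℝ) :
    α ^ 2 * cosh (β * t) ^ 2 ≤ breatherDen α β y t :=
  le_add_of_nonneg_right (by positivity)

theorem breather_neg (y t : ℝ) : breather α β y (-t) = breather α β y t := by
  simp only [breather, mul_neg, cosh_neg]

theorem breatherDt_neg (y t : ℝ) : breatherDt α β y (-t) = breatherDt α β y t := by
  simp only [breatherDt, breatherDen, mul_neg, cosh_neg]

theorem hasDerivAt_breather (hα : α ≠ 0) (y t : ℝ) :
    HasDerivAt (breather α β y)
      (-(4 * α * β ^ 2 * sin (α * y) * sinh (β * t)) / breatherDen α β y t) t := by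
  have hcosh := ((hasDerivAt_id' t).const_mul β).cosh.const_mul α
  refine (((hasDerivAt_const t (β * sin (α * y))).div hcosh
    (by positivity)).arctan.const_mul 4).congr_deriv ?_
  have := breatherDen_pos (β := β) hα y t
  unfold breatherDen at this ⊢
  dsimp only [Pi.div_apply]
  field_simp
  ring

theorem hasDerivAt_breatherDt (hα : α ≠ 0) (y t : ℝ) :
    HasDerivAt (breatherDt α β y)
      (4 * α ^ 2 * β ^ 2 * cos (α * y) * sinh (β * t) *
          (β ^ 2 * sin (α * y) ^ 2 - α ^ 2 * cosh (β * t) ^ 2) / breatherDen α β y t ^ 2) t := by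
  have hcosh := ((hasDerivAt_id' t).const_mul β).cosh
  refine ((hcosh.const_mul (4 * α ^ 2 * β * cos (α * y))).div
    (((hcosh.fun_pow 2).const_mul (α ^ 2)).add_const (β ^ 2 * sin (α * y) ^ 2))
    (breatherDen_pos hα y t).ne').congr_deriv ?_
  have := breatherDen_pos (β := β) hα y t
  unfold breatherDen at this ⊢
  field_simp
  ring

theorem hasDerivAt_breatherDt_param (hα : α ≠ 0) (y t : ℝ) :
    HasDerivAt (fun y => breatherDt α β y t)
      (-(4 * α ^ 3 * β * cosh (β * t) * sin (α * y) *
          (breatherDen α β y t + 2 * β ^ 2 * cos (α * y) ^ 2)) / breatherDen α β y t ^ 2) y := by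
  have hαy := (hasDerivAt_id' y).const_mul α
  refine (((hαy.cos.const_mul (4 * α ^ 2 * β)).mul_const (cosh (β * t))).div
    (((hαy.sin.fun_pow 2).const_mul (β ^ 2)).const_add (α ^ 2 * cosh (β * t) ^ 2))
    (breatherDen_pos hα y t).ne').congr_deriv ?_
  have := breatherDen_pos (β := β) hα y t
  unfold breatherDen at this ⊢
  field_simp
  ring

theorem abs_sinh_le_cosh (u : ℝ) : |sinh u| ≤ cosh u :=
  abs_le_of_sq_le_sq (by nlinarith [cosh_sq u]) (cosh_pos u).le

theorem isBigO_breatherDt (hα : α ≠ 0) (y : ℝ) :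
    breatherDt α β y =O[⊤] fun t => (cosh (β * t))⁻¹ :=
  isBigO_inv_cosh_of_abs_le (4 * |β|) fun t => by
    have hc := cosh_pos (β * t)
    calc |breatherDt α β y t|
        = 4 * α ^ 2 * |β| * |cos (α * y)| * cosh (β * t) / breatherDen α β y t := by
          rw [breatherDt, abs_div, abs_of_pos (breatherDen_pos hα y t)]
          simp only [abs_mul, abs_pow, sq_abs, abs_of_pos hc, Nat.abs_ofNat]
      _ ≤ 4 * α ^ 2 * |β| * 1 * cosh (β * t) / (α ^ 2 * cosh (β * t) ^ 2) := by
          gcongr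
          exacts [abs_cos_le_one _, sq_mul_cosh_sq_le_breatherDen y t]
      _ = 4 * |β| / cosh (β * t) := by field_simp

theorem isBigO_deriv_breather (hα : α ≠ 0) (y : ℝ) :
    deriv (breather α β y) =O[⊤] fun t => (cosh (β * t))⁻¹ :=
  isBigO_inv_cosh_of_abs_le (4 * β ^ 2 / |α|) fun t => by
    have hD := sq_mul_cosh_sq_le_breatherDen (α := α) (β := β) y t
    rw [← sq_abs α] at hD
    rw [(hasDerivAt_breather hα y t).deriv]
    calc |-(4 * α * β ^ 2 * sin (α * y) * sinh (β * t)) / breatherDen α β y t|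
        = 4 * |α| * β ^ 2 * |sin (α * y)| * |sinh (β * t)| / breatherDen α β y t := by
          rw [abs_div, abs_of_pos (breatherDen_pos hα y t), abs_neg]
          simp only [abs_mul, abs_pow, sq_abs, Nat.abs_ofNat]
      _ ≤ 4 * |α| * β ^ 2 * 1 * cosh (β * t) / (|α| ^ 2 * cosh (β * t) ^ 2) := by
          gcongr
          exacts [abs_sin_le_one _, abs_sinh_le_cosh _]
      _ = 4 * β ^ 2 / |α| / cosh (β * t) := by field_simp

theorem isBigO_deriv_breatherDt (hα : α ≠ 0) (y : ℝ) :
    deriv (breatherDt α β y) =O[⊤] fun t => (cosh (β * t))⁻¹ :=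
  isBigO_inv_cosh_of_abs_le (4 * β ^ 2) fun t => by
    have hD := breatherDen_pos (β := β) hα y t
    have hdiff : |β ^ 2 * sin (α * y) ^ 2 - α ^ 2 * cosh (β * t) ^ 2| ≤ breatherDen α β y t := by
      unfold breatherDen
      rw [abs_sub_le_iff]
      constructor <;> nlinarith [sq_nonneg (β * sin (α * y)), sq_nonneg (α * cosh (β * t))]
    rw [(hasDerivAt_breatherDt hα y t).deriv]
    calc |4 * α ^ 2 * β ^ 2 * cos (α * y) * sinh (β * t) *
            (β ^ 2 * sin (α * y) ^ 2 - α ^ 2 * cosh (β * t) ^ 2) / breatherDen α β y t ^ 2|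
        = 4 * α ^ 2 * β ^ 2 * |cos (α * y)| * |sinh (β * t)| *
            |β ^ 2 * sin (α * y) ^ 2 - α ^ 2 * cosh (β * t) ^ 2| / breatherDen α β y t ^ 2 := by
          rw [abs_div, abs_of_pos (pow_pos hD 2)]
          simp only [abs_mul, abs_pow, sq_abs, Nat.abs_ofNat]
      _ ≤ 4 * α ^ 2 * β ^ 2 * 1 * cosh (β * t) * breatherDen α β y t /
            breatherDen α β y t ^ 2 := by
          gcongr
          exacts [abs_cos_le_one _, abs_sinh_le_cosh _]
      _ = 4 * α ^ 2 * β ^ 2 * cosh (β * t) / breatherDen α β y t := by field_simp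
      _ ≤ 4 * α ^ 2 * β ^ 2 * cosh (β * t) / (α ^ 2 * cosh (β * t) ^ 2) := by
          gcongr
          exact sq_mul_cosh_sq_le_breatherDen y t
      _ = 4 * β ^ 2 / cosh (β * t) := by field_simp

theorem isBigO_deriv_breatherDt_param (hα : α ≠ 0) (y : ℝ) :
    (fun t => deriv (fun y => breatherDt α β y t) y) =O[⊤] fun t => (cosh (β * t))⁻¹ :=
  isBigO_inv_cosh_of_abs_le (4 * |β| * (α ^ 2 + 2 * β ^ 2) / |α|) fun t => by
    have hc := cosh_pos (β * t)
    have hD := breatherDen_pos (β := β) hα y t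
    have hle := sq_mul_cosh_sq_le_breatherDen (α := α) (β := β) y t
    rw [← sq_abs α] at hle
    have hcos : cos (α * y) ^ 2 ≤ breatherDen α β y t / |α| ^ 2 := by
      rw [le_div_iff₀ (by positivity)]
      calc cos (α * y) ^ 2 * |α| ^ 2 ≤ 1 * |α| ^ 2 := by gcongr; exact cos_sq_le_one _
        _ ≤ |α| ^ 2 * cosh (β * t) ^ 2 :=
          (one_mul _).trans_le (le_mul_of_one_le_right (by positivity)
            (one_le_pow₀ (one_le_cosh _)))
        _ ≤ breatherDen α β y t := hle
    have hN : 0 ≤ breatherDen α β y t + 2 * β ^ 2 * cos (α * y) ^ 2 := by positivity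
    rw [(hasDerivAt_breatherDt_param hα y t).deriv]
    calc |-(4 * α ^ 3 * β * cosh (β * t) * sin (α * y) *
            (breatherDen α β y t + 2 * β ^ 2 * cos (α * y) ^ 2)) / breatherDen α β y t ^ 2|
        = 4 * |α| ^ 3 * |β| * cosh (β * t) * |sin (α * y)| *
            (breatherDen α β y t + 2 * β ^ 2 * cos (α * y) ^ 2) / breatherDen α β y t ^ 2 := by
          rw [abs_div, abs_of_pos (pow_pos hD 2), abs_neg]
          simp only [abs_mul, abs_pow, Nat.abs_ofNat, abs_of_pos hc, abs_of_nonneg hN]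
      _ ≤ 4 * |α| ^ 3 * |β| * cosh (β * t) * 1 *
            (breatherDen α β y t + 2 * β ^ 2 * (breatherDen α β y t / |α| ^ 2)) /
            breatherDen α β y t ^ 2 := by
          gcongr
          exact abs_sin_le_one _
      _ = 4 * |α| * |β| * (α ^ 2 + 2 * β ^ 2) * cosh (β * t) / breatherDen α β y t := by
          rw [← sq_abs α]
          field_simp
      _ ≤ 4 * |α| * |β| * (α ^ 2 + 2 * β ^ 2) * cosh (β * t) / (|α| ^ 2 * cosh (β * t) ^ 2) := by
          gcongr
      _ = 4 * |β| * (α ^ 2 + 2 * β ^ 2) / |α| / cosh (β * t) := by field_simp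

theorem integrable_breatherDt_mul_deriv_breather (hα : α ≠ 0) (hβ : β ≠ 0) (y : ℝ) :
    Integrable fun t => breatherDt α β y t * deriv (breather α β y) t :=
  integrable_mul_of_isBigO_inv_cosh hβ (isBigO_breatherDt hα y) (isBigO_deriv_breather hα y)
    (by unfold breatherDt breatherDen; fun_prop : Measurable _).aestronglyMeasurable
    (measurable_deriv _).aestronglyMeasurable

theorem integrable_deriv_breatherDt_param_mul_deriv_breatherDt (hα : α ≠ 0) (hβ : β ≠ 0)
    (y : ℝ) :
    Integrable fun t => deriv (fun y => breatherDt α β y t) y * deriv (breatherDt α β y) t := by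
  have hm : Measurable fun t => deriv (fun y => breatherDt α β y t) y := by
    rw [funext fun t => (hasDerivAt_breatherDt_param hα y t).deriv]
    unfold breatherDen
    fun_prop
  exact integrable_mul_of_isBigO_inv_cosh hβ (isBigO_deriv_breatherDt_param hα y)
    (isBigO_deriv_breatherDt hα y) hm.aestronglyMeasurable (measurable_deriv _).aestronglyMeasurable

end Breather

/-- **Parity and orthogonality for the breather profile (Appendix B.1).**
For the breather profile `B(x;β,x₁,x₂)` and its time-derivative profile `Bₜ(x;β,x₁,x₂)`:
(a) when `x₂ = 0`, `x ↦ Bₜ` and `x ↦ ∂_{x₁}Bₜ` are even while `x ↦ ∂ₓB` and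
`x ↦ ∂_{x₂}Bₜ` are odd; (b) for all `x₁, x₂`, the products `Bₜ·∂ₓB` and
`∂_{x₁}Bₜ·∂_{x₂}Bₜ` are integrable over `ℝ` with vanishing integrals. -/
theorem breather_parity_orthogonality (β : ℝ) (hβ0 : 0 < |β|) (hβ1 : |β| < 1)
    (α : ℝ) (hα : α = Real.sqrt (1 - β ^ 2))
    (B Bt : ℝ → ℝ → ℝ → ℝ)
    (hB : ∀ x y₁ y₂ : ℝ, B x y₁ y₂
      = 4 * Real.arctan (β * Real.sin (α * y₁) / (α * Real.cosh (β * (x + y₂)))))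
    (hBt : ∀ x y₁ y₂ : ℝ, Bt x y₁ y₂
      = 4 * α ^ 2 * β * Real.cos (α * y₁) * Real.cosh (β * (x + y₂))
          / (α ^ 2 * (Real.cosh (β * (x + y₂))) ^ 2 + β ^ 2 * (Real.sin (α * y₁)) ^ 2)) :
    -- (a) parity at x₂ = 0
    (∀ x₁ x : ℝ, Bt (-x) x₁ 0 = Bt x x₁ 0) ∧
    (∀ x₁ x : ℝ, deriv (fun y₁ => Bt (-x) y₁ 0) x₁ = deriv (fun y₁ => Bt x y₁ 0) x₁) ∧
    (∀ x₁ x : ℝ, deriv (fun y => B y x₁ 0) (-x) = -deriv (fun y => B y x₁ 0) x) ∧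
    (∀ x₁ x : ℝ, deriv (fun y₂ => Bt (-x) x₁ y₂) 0 = -deriv (fun y₂ => Bt x x₁ y₂) 0) ∧
    -- (b) orthogonality for all shifts
    (∀ x₁ x₂ : ℝ,
      Integrable (fun x : ℝ => Bt x x₁ x₂ * deriv (fun y => B y x₁ x₂) x) ∧
      Integrable (fun x : ℝ =>
        deriv (fun y₁ => Bt x y₁ x₂) x₁ * deriv (fun y₂ => Bt x x₁ y₂) x₂) ∧
      (∫ x : ℝ, Bt x x₁ x₂ * deriv (fun y => B y x₁ x₂) x) = 0 ∧
      (∫ x : ℝ, deriv (fun y₁ => Bt x y₁ x₂) x₁ * deriv (fun y₂ => Bt x x₁ y₂) x₂) = 0) := by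
  have hα0 : α ≠ 0 := by
    rw [hα]
    exact (sqrt_pos.mpr (by nlinarith [sq_abs β])).ne'
  have hβ : β ≠ 0 := abs_pos.mp hβ0
  obtain rfl : B = fun x y₁ y₂ => breather α β y₁ (x + y₂) := by
    funext x y₁ y₂
    exact hB x y₁ y₂
  obtain rfl : Bt = fun x y₁ y₂ => breatherDt α β y₁ (x + y₂) := by
    funext x y₁ y₂
    exact hBt x y₁ y₂
  have hBx_odd (y : ℝ) : (deriv (breather α β y)).Odd := Function.Even.odd_deriv (breather_neg y)
  have hBtx_odd (y : ℝ) : (deriv (breatherDt α β y)).Odd :=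
    Function.Even.odd_deriv (breatherDt_neg y)
  have hBtx₁_even (y : ℝ) : (fun t => deriv (fun y => breatherDt α β y t) y).Even := fun t => by
    simp only [breatherDt_neg]
  simp only [add_zero, deriv_comp_add_const, deriv_comp_const_add, breatherDt_neg]
  refine ⟨fun _ _ => trivial, fun _ _ => trivial, fun y x => hBx_odd y x, fun y x => hBtx_odd y x,
    fun x₁ x₂ => ⟨?_, ?_, ?_, ?_⟩⟩
  · exact (integrable_breatherDt_mul_deriv_breather hα0 hβ x₁).comp_add_right x₂
  · exact (integrable_deriv_breatherDt_param_mul_deriv_breatherDt hα0 hβ x₁).comp_add_right x₂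
  · exact (integral_add_right_eq_self (fun t => breatherDt α β x₁ t * deriv (breather α β x₁) t)
      x₂).trans (Function.Even.mul_odd (breatherDt_neg x₁) (hBx_odd x₁)).integral_eq_zero
  · exact (integral_add_right_eq_self
      (fun t => deriv (fun y => breatherDt α β y t) x₁ * deriv (breatherDt α β x₁) t) x₂).trans
      ((hBtx₁_even x₁).mul_odd (hBtx_odd x₁)).integral_eq_zero
end
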